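/- Let $\mu \in \mathbb{R}$, $s > 0$, and $\hat{\gamma}, \tilde{\gamma} > 0$ with $\hat{\gamma} > 2 s^2 \tilde{\gamma}$. Let $H \sim \mathcal{N}(\mu, s^2)$ and let $E$ be an independent exponential random variable with rate $1$, and set $\gamma_1 = \hat{\gamma} E + \tilde{\gamma} H^2$. Then for every target sum rate $R_t > 0$, writing $\gamma_t = 2^{R_t} - 1$, $\Pr\big(\log_2(1 + \gamma_1) \leq R_t\big) = \sum_{l=0}^{\infty} \frac{\beta_l}{\zeta^{\kappa_l}}\, \gamma_{\ell}\Big(\kappa_l, \frac{\zeta \gamma_t}{\tilde{\gamma}}\Big) - e^{-\gamma_t/\hat{\gamma}} \sum_{l=0}^{\infty} \frac{\beta_l}{\omega^{\kappa_l}}\, \gamma_{\ell}\Big(\kappa_l, \frac{\omega \gamma_t}{\tilde{\gamma}}\Big)$, where $\zeta = 1/(2 s^2)$, $\omega = \zeta - \tilde{\gamma}/\hat{\gamma}$, $\kappa_l = l + 1/2$, $\beta_l = \dfrac{e^{-\mu^2/(2 s^2)}\, \mu^{2l}}{(2 s^2)^{2l + 1/2} \; l! \; \Gamma(l + 1/2)}$,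 and $\gamma_{\ell}(\kappa, x) = \int_0^x u^{\kappa - 1} e^{-u}\, du$ is the lower incomplete gamma function. -/

import Mathlib

open Real MeasureTheory ProbabilityTheory
open scoped ENNReal NNReal

/-- The lower incomplete gamma function `γ(κ, x) = ∫_0^x u^(κ-1) e^(-u) du`. -/
noncomputable def lowerIncGamma (κ x : ℝ) : ℝ :=
  ∫ u in (0:ℝ)..x, u ^ (κ - 1) * Real.exp (-u)

/-- Mixture coefficient `β_l = e^(-m²/(2s²)) m^(2l) / ((2s²)^(2l+1/2) l! Γ(l+1/2))`. -/
noncomputable def mixCoeff (m s : ℝ) (l : ℕ) : ℝ :=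
  Real.exp (-m ^ 2 / (2 * s ^ 2)) * m ^ (2 * l) /
    ((2 * s ^ 2) ^ ((2 * (l : ℝ)) + 1 / 2) * (Nat.factorial l) *
      Real.Gamma ((l : ℝ) + 1 / 2))


section AuxLemmas
open intervalIntegral

private lemma Gamma_nat_add_half (l : ℕ) :
    Real.Gamma ((l : ℝ) + 1/2) =
      (Nat.factorial (2*l)) * Real.sqrt π / (4^l * Nat.factorial l) := by
  induction l with
  | zero => rw [show ((0:ℕ):ℝ) + 1/2 = 1/2 by norm_num, Real.Gamma_one_half_eq]; simp
  | succ n ih =>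
      have h1 : ((n+1 : ℕ) : ℝ) + 1/2 = ((n:ℝ) + 1/2) + 1 := by push_cast; ring
      rw [h1, Real.Gamma_add_one (by positivity), ih]
      have h2 : (2*(n+1)) = (2*n+1) + 1 := by ring
      rw [h2, Nat.factorial_succ, Nat.factorial_succ, Nat.factorial_succ]
      push_cast
      have h4 : (4:ℝ)^(n+1) = 4 * 4^n := by ring
      rw [h4]
      field_simp
      ring

private lemma lig_integrable {κ : ℝ} (hκ : 0 < κ) {T : ℝ} (hT : 0 ≤ T) :
    IntervalIntegrable (fun u => u ^ (κ - 1) * Real.exp (-u)) volume 0 T := by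
  have hbase : IntervalIntegrable (fun u : ℝ => u ^ (κ - 1)) volume 0 T :=
    intervalIntegrable_rpow' (by linarith)
  refine hbase.mono_fun ?_ ?_
  · exact ((measurable_id.pow_const _).mul (measurable_exp.comp measurable_neg)).aestronglyMeasurable
  · rw [Set.uIoc_of_le hT]
    filter_upwards [ae_restrict_mem measurableSet_Ioc] with u hu
    have hu0 : 0 < u := hu.1
    have h1 : Real.exp (-u) ≤ 1 := by
      rw [Real.exp_le_one_iff]; linarith
    have h2 : (0:ℝ) ≤ u ^ (κ - 1) := Real.rpow_nonneg hu0.le _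
    simp only [Real.norm_eq_abs, abs_mul, abs_of_nonneg h2,
      abs_of_nonneg (Real.exp_pos _).le]
    nlinarith [Real.exp_pos (-u)]

lemma lig_hasDerivAt {κ : ℝ} (hκ : 0 < κ) {y : ℝ} (hy : 0 < y) :
    HasDerivAt (lowerIncGamma κ) (y ^ (κ - 1) * Real.exp (-y)) y := by
  apply intervalIntegral.integral_hasDerivAt_right (lig_integrable hκ hy.le)
  · exact ((measurable_id.pow_const _).mul
      (measurable_exp.comp measurable_neg)).aestronglyMeasurable.stronglyMeasurableAtFilter
  · exact ((Real.continuousAt_rpow_const _ _ (Or.inl hy.ne')).mul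
      ((Real.continuous_exp.comp continuous_neg).continuousAt))

lemma lig_continuousOn {κ : ℝ} (hκ : 0 < κ) {T : ℝ} (hT : 0 ≤ T) :
    ContinuousOn (lowerIncGamma κ) (Set.Icc 0 T) := by
  have := intervalIntegral.continuousOn_primitive_interval'
    (lig_integrable hκ hT) (Set.left_mem_uIcc)
  rwa [Set.uIcc_of_le hT] at this

private -- half-line version
lemma int_half {w T : ℝ} (hw : 0 < w) (hT : 0 ≤ T) (l : ℕ) :
    ∫ x in (0:ℝ)..(Real.sqrt T), 2 * (x^(2*l) * Real.exp (-(w*x^2)))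
      = lowerIncGamma ((l:ℝ) + 1/2) (w*T) / w ^ ((l:ℝ) + 1/2) := by
  set κ : ℝ := (l:ℝ) + 1/2 with hκdef
  have hκ : (0:ℝ) < κ := by positivity
  set a := Real.sqrt T with ha
  have ha0 : 0 ≤ a := Real.sqrt_nonneg T
  set G : ℝ → ℝ := fun x => lowerIncGamma κ (w * x^2) / w ^ κ with hG
  have key : ∫ x in (0:ℝ)..a, 2 * (x^(2*l) * Real.exp (-(w*x^2))) = G a - G 0 := by
    apply intervalIntegral.integral_eq_sub_of_hasDeriv_right_of_le ha0
    · -- continuity of G on [0, a]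
      apply ContinuousOn.div_const
      apply (lig_continuousOn hκ (by positivity : (0:ℝ) ≤ w * T)).comp
        (Continuous.continuousOn (by continuity))
      intro x hx
      simp only [Set.mem_Icc] at hx ⊢
      constructor
      · positivity
      · have : x^2 ≤ T := by
          have := Real.sq_sqrt hT
          nlinarith [hx.1, hx.2]
        nlinarith
    · -- derivative on Ioo
      intro x hx
      have hx0 : 0 < x := hx.1
      have h1 : HasDerivAt (fun x : ℝ => w * x^2) (w * (2*x)) x := by
        simpa using ((hasDerivAt_pow 2 x).const_mul w)
      have h2 : HasDerivAt G
          (((w*x^2) ^ (κ - 1) * Real.exp (-(w*x^2))) * (w * (2*x)) / w ^ κ) x := by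
        exact (((lig_hasDerivAt hκ (by positivity)).comp x h1).div_const _)
      convert h2.hasDerivWithinAt using 1
      have hwx : (w*x^2) ^ (κ-1) = w ^ (κ-1) * (x^2) ^ (κ-1) :=
        Real.mul_rpow hw.le (by positivity)
      have hx2 : (x^2 : ℝ) ^ (κ-1) = x ^ (2*(κ-1)) := by
        rw [← Real.rpow_natCast x 2, ← Real.rpow_mul hx0.le]
        norm_num
      have hxx : x ^ (2*(κ-1)) * x = (x:ℝ) ^ (2*l : ℕ) := by
        have h := (Real.rpow_add hx0 (2*(κ-1)) 1).symm
        rw [Real.rpow_one] at h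
        rw [h, show 2*(κ-1)+1 = ((2*l : ℕ) : ℝ) by rw [hκdef]; push_cast; ring,
          Real.rpow_natCast]
      have hww : w ^ (κ-1) * w = w ^ κ := by
        have h := (Real.rpow_add hw (κ-1) 1).symm
        rw [Real.rpow_one] at h
        rw [h, show κ-1+1 = κ by ring]
      rw [hwx, hx2, ← hxx, ← hww]
      have h1 : w ^ (κ-1) ≠ 0 := (Real.rpow_pos_of_pos hw _).ne'
      field_simp
    · exact (Continuous.intervalIntegrable (by continuity) _ _)
  rw [key]
  have hG0 : G 0 = 0 := by
    simp [hG, lowerIncGamma]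
  have hGa : G a = lowerIncGamma κ (w*T) / w ^ κ := by
    simp only [hG]
    rw [Real.sq_sqrt hT]
  rw [hG0, hGa, sub_zero]

lemma int_sym {w T : ℝ} (hw : 0 < w) (hT : 0 ≤ T) (l : ℕ) :
    ∫ x in (-(Real.sqrt T))..(Real.sqrt T), x^(2*l) * Real.exp (-(w*x^2))
      = lowerIncGamma ((l:ℝ)+1/2) (w*T) / w ^ ((l:ℝ)+1/2) := by
  have ha0 : 0 ≤ Real.sqrt T := Real.sqrt_nonneg T
  set a := Real.sqrt T with ha
  set f : ℝ → ℝ := fun x => x^(2*l) * Real.exp (-(w*x^2)) with hf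
  have hcont : Continuous f := by
    apply Continuous.mul (continuous_pow _)
    exact Real.continuous_exp.comp (by continuity)
  have hneg : ∫ x in (-a)..(0:ℝ), f x = ∫ x in (0:ℝ)..a, f x := by
    have h := intervalIntegral.integral_comp_neg (a := (0:ℝ)) (b := a) f
    simp only [neg_zero] at h
    rw [← h]
    apply intervalIntegral.integral_congr
    intro x _
    simp only [hf]
    rw [Even.neg_pow (even_two_mul l), neg_pow, neg_sq]
    ring_nf
  have hsplit : ∫ x in (-a)..a, f x = (∫ x in (-a)..(0:ℝ), f x) + ∫ x in (0:ℝ)..a, f x :=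
    (intervalIntegral.integral_add_adjacent_intervals (hcont.intervalIntegrable _ _)
      (hcont.intervalIntegrable _ _)).symm
  have h2 : ∫ x in (0:ℝ)..a, 2 * f x = 2 * ∫ x in (0:ℝ)..a, f x :=
    intervalIntegral.integral_const_mul 2 f
  have := int_half hw hT l
  rw [hsplit, hneg]
  simp only [hf] at h2 this ⊢
  rw [← this, h2]
  ring

private lemma integral_tsum_nonneg {S : Set ℝ} {F : ℝ → ℝ} (f : ℕ → ℝ → ℝ)
    (hmeas : ∀ l, Measurable (f l)) (hpos : ∀ l x, 0 ≤ f l x)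
    (hint : ∀ l, IntegrableOn (f l) S volume)
    (hFmeas : AEStronglyMeasurable F (volume.restrict S))
    (hF : ∀ x, HasSum (fun l => f l x) (F x)) :
    ∫ x in S, F x = ∑' l, ∫ x in S, f l x := by
  have h0 : 0 ≤ᵐ[volume.restrict S] F := by
    filter_upwards with x
    rw [← (hF x).tsum_eq]
    exact tsum_nonneg (fun l => hpos l x)
  rw [MeasureTheory.integral_eq_lintegral_of_nonneg_ae h0 hFmeas]
  have hpt : ∀ x, ENNReal.ofReal (F x) = ∑' l, ENNReal.ofReal (f l x) := by
    intro x
    rw [← (hF x).tsum_eq]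
    exact ENNReal.ofReal_tsum_of_nonneg (fun l => hpos l x) (hF x).summable
  simp_rw [hpt]
  rw [lintegral_tsum (fun l => ((hmeas l).ennreal_ofReal).aemeasurable)]
  have heach : ∀ l, (∫⁻ x in S, ENNReal.ofReal (f l x)) = ENNReal.ofReal (∫ x in S, f l x) :=
    fun l => (MeasureTheory.ofReal_integral_eq_lintegral_ofReal (hint l)
      (Filter.Eventually.of_forall (fun x => hpos l x))).symm
  simp_rw [heach]
  rw [ENNReal.tsum_toReal_eq (fun l => ENNReal.ofReal_ne_top)]
  exact tsum_congr fun l => ENNReal.toReal_ofReal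
    (MeasureTheory.integral_nonneg (fun x => hpos l x))

private lemma mixCoeff_eq (m s : ℝ) (hs : 0 < s) (l : ℕ) :
    mixCoeff m s l = Real.exp (-m^2/(2*s^2)) / (Real.sqrt (2*π) * s) *
      ((m/s^2)^(2*l) / (Nat.factorial (2*l))) := by
  unfold mixCoeff
  rw [_root_.Gamma_nat_add_half]
  have h1 : (2*s^2 : ℝ) ^ ((2*(l:ℝ)) + 1/2)
      = (2*s^2)^(2*l : ℕ) * (Real.sqrt 2 * s) := by
    rw [show (2*(l:ℝ)) + 1/2 = ((2*l:ℕ):ℝ) + 1/2 by push_cast; ring,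
      Real.rpow_add (by positivity), Real.rpow_natCast,
      show ((1:ℝ)/2) = (1/2 : ℝ) from rfl, ← Real.sqrt_eq_rpow,
      Real.sqrt_mul (by norm_num) (s^2), Real.sqrt_sq hs.le]
  rw [h1, Real.sqrt_mul (by norm_num : (0:ℝ) ≤ 2) π]
  have h4 : (4:ℝ)^l = 2^(2*l) := by
    rw [show (4:ℝ) = 2^2 by norm_num, ← pow_mul]
  rw [h4]
  have hs0 : s ≠ 0 := hs.ne'
  have hsq2 : Real.sqrt 2 ≠ 0 := by positivity
  have hsqp : Real.sqrt π ≠ 0 := by positivity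
  have hfl : (Nat.factorial l : ℝ) ≠ 0 := Nat.cast_ne_zero.2 (Nat.factorial_ne_zero l)
  have hf2l : (Nat.factorial (2*l) : ℝ) ≠ 0 := Nat.cast_ne_zero.2 (Nat.factorial_ne_zero _)
  field_simp
  have hss : s ^ (l * 4) * s⁻¹ ^ (l * 4) = 1 := by rw [← mul_pow, mul_inv_cancel₀ hs0, one_pow]
  linear_combination (-(m ^ (l * 2) * 2 ^ (l * 2))) * hss

private lemma gauss_series (m s : ℝ) (hs : 0 < s) {c T : ℝ} (hT : 0 ≤ T)
    (hw : 0 < 1/(2*s^2) - c) :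
    ∫ h in Set.Icc (-Real.sqrt T) (Real.sqrt T),
        gaussianPDFReal m (⟨s^2, sq_nonneg s⟩ : ℝ≥0) h * Real.exp (c * h^2)
      = ∑' l : ℕ, mixCoeff m s l / (1/(2*s^2) - c) ^ ((l:ℝ) + 1/2) *
          lowerIncGamma ((l:ℝ) + 1/2) ((1/(2*s^2) - c) * T) := by
  have hs0 : s ≠ 0 := hs.ne'
  set w : ℝ := 1/(2*s^2) - c with hwdef
  set b : ℝ := m / s^2 with hbdef
  set K : ℝ := Real.exp (-m^2/(2*s^2)) / (Real.sqrt (2*π) * s) with hKdef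
  set a : ℝ := Real.sqrt T with hadef
  have ha0 : 0 ≤ a := Real.sqrt_nonneg T
  have hKpos : 0 < K := by
    apply div_pos (Real.exp_pos _)
    positivity
  -- pointwise rewriting of the integrand
  have hpt : ∀ h : ℝ, gaussianPDFReal m (⟨s^2, sq_nonneg s⟩ : ℝ≥0) h * Real.exp (c * h^2)
      = K * (Real.exp (-(w*h^2)) * Real.cosh (b*h))
        + K * (Real.exp (-(w*h^2)) * Real.sinh (b*h)) := by
    intro h
    unfold gaussianPDFReal
    change (√(2 * π * s^2))⁻¹ * rexp (-(h - m) ^ 2 / (2 * s^2)) * rexp (c * h^2) = _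
    have hsqrt : Real.sqrt (2 * π * s^2) = Real.sqrt (2*π) * s := by
      rw [Real.sqrt_mul (by positivity) (s^2), Real.sqrt_sq hs.le]
    rw [hsqrt]
    have hch : Real.cosh (b*h) + Real.sinh (b*h) = Real.exp (b*h) := Real.cosh_add_sinh _
    have : K * (Real.exp (-(w*h^2)) * Real.cosh (b*h))
        + K * (Real.exp (-(w*h^2)) * Real.sinh (b*h))
        = K * (Real.exp (-(w*h^2)) * Real.exp (b*h)) := by
      rw [← hch]; ring
    rw [this]
    have h2 : -(h - m)^2 / (2*s^2) + c*h^2 = -m^2/(2*s^2) + (-(w*h^2) + b*h) := by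
      rw [hwdef, hbdef]; field_simp; ring
    calc (√(2*π)*s)⁻¹ * rexp (-(h-m)^2/(2*s^2)) * rexp (c*h^2)
        = (√(2*π)*s)⁻¹ * rexp (-(h-m)^2/(2*s^2) + c*h^2) := by
          rw [mul_assoc, ← Real.exp_add]
      _ = (√(2*π)*s)⁻¹ * rexp (-m^2/(2*s^2) + (-(w*h^2) + b*h)) := by rw [h2]
      _ = K * (rexp (-(w*h^2)) * rexp (b*h)) := by
          rw [hKdef, Real.exp_add, Real.exp_add]; ring
  simp_rw [hpt]
  have hcont1 : Continuous (fun x : ℝ => K * (Real.exp (-(w*x^2)) * Real.cosh (b*x))) := by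
    fun_prop
  have hcont2 : Continuous (fun x : ℝ => K * (Real.exp (-(w*x^2)) * Real.sinh (b*x))) := by
    fun_prop
  have hIcc : ∀ g : ℝ → ℝ, Continuous g →
      (∫ x in Set.Icc (-a) a, g x) = ∫ x in (-a)..a, g x := by
    intro g hg
    rw [intervalIntegral.integral_of_le (by linarith), MeasureTheory.integral_Icc_eq_integral_Ioc]
  rw [MeasureTheory.integral_add (hcont1.integrableOn_Icc)
    (hcont2.integrableOn_Icc)]
  -- the sinh part vanishes by oddness
  have hodd : (∫ x in Set.Icc (-a) a, K * (Real.exp (-(w*x^2)) * Real.sinh (b*x))) = 0 := by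
    rw [hIcc _ hcont2]
    set g : ℝ → ℝ := fun x => K * (Real.exp (-(w*x^2)) * Real.sinh (b*x)) with hg
    have h1 := intervalIntegral.integral_comp_neg (a := -a) (b := a) g
    simp only [neg_neg] at h1
    have h2 : ∀ x, g (-x) = - g x := by
      intro x
      simp only [hg, neg_sq, Real.sinh_neg, mul_neg, neg_mul, neg_neg]
    simp_rw [h2] at h1
    rw [intervalIntegral.integral_neg] at h1
    linarith [h1]
  rw [hodd, add_zero]
  -- main series
  set f : ℕ → ℝ → ℝ := fun l x =>
    (K * b^(2*l) / (Nat.factorial (2*l))) * (x^(2*l) * Real.exp (-(w*x^2))) with hfdef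
  have hfmeas : ∀ l, Measurable (f l) := by
    intro l
    exact measurable_const.mul ((measurable_id.pow_const _).mul
      (Real.measurable_exp.comp (by fun_prop)))
  have hfpos : ∀ l x, 0 ≤ f l x := by
    intro l x
    apply mul_nonneg
    · exact div_nonneg (mul_nonneg hKpos.le ((even_two_mul l).pow_nonneg b)) (by positivity)
    · exact mul_nonneg ((even_two_mul l).pow_nonneg x) (Real.exp_pos _).le
  have hfcont : ∀ l, Continuous (f l) := by
    intro l
    exact continuous_const.mul ((continuous_pow _).mul
      (Real.continuous_exp.comp (by fun_prop)))
  have hfint : ∀ l, IntegrableOn (f l) (Set.Icc (-a) a) volume :=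
    fun l => (hfcont l).integrableOn_Icc
  have hFsum : ∀ x : ℝ, HasSum (fun l => f l x)
      (K * (Real.exp (-(w*x^2)) * Real.cosh (b*x))) := by
    intro x
    have h := (Real.hasSum_cosh (b*x)).mul_left (K * Real.exp (-(w*x^2)))
    have heq : (fun l => K * Real.exp (-(w*x^2)) * ((b*x)^(2*l) / (Nat.factorial (2*l))))
        = fun l => f l x := by
      funext l
      simp only [hfdef, mul_pow]
      ring
    rw [← mul_assoc]
    exact heq ▸ h
  rw [integral_tsum_nonneg f hfmeas hfpos hfint
    hcont1.aestronglyMeasurable.restrict hFsum]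
  apply tsum_congr
  intro l
  have hone : (∫ x in Set.Icc (-a) a, f l x)
      = (K * b^(2*l) / (Nat.factorial (2*l))) *
        (lowerIncGamma ((l:ℝ)+1/2) (w*T) / w ^ ((l:ℝ)+1/2)) := by
    rw [hIcc _ (hfcont l)]
    simp only [hfdef]
    rw [intervalIntegral.integral_const_mul, hadef, int_sym hw hT l]
  rw [hone, mixCoeff_eq m s hs l, ← hKdef, ← hbdef]
  ring

end AuxLemmas

/-- Sum-rate outage probability of the helper user in the RIS-aided single dirty MAC:
for `γ₁ = γ̂ E + γ̃ H²` with `E` rate-1 exponential, `H ~ N(m, s²)` independent,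
`Pr(log₂(1 + γ₁) ≤ R_t)` is given by the incomplete-gamma series. -/
theorem outage_single_dirty_MAC_sum_rate {Ω : Type*} [MeasurableSpace Ω]
    (μ : Measure Ω) [IsProbabilityMeasure μ]
    (m s γhat γtil : ℝ) (hs : 0 < s) (hγhat : 0 < γhat) (hγtil : 0 < γtil)
    (hcond : 2 * s ^ 2 * γtil < γhat)
    (H E : Ω → ℝ) (hH : Measurable H) (hE : Measurable E)
    (hindep : IndepFun E H μ)
    (hHlaw : μ.map H = gaussianReal m (⟨s ^ 2, sq_nonneg s⟩ : ℝ≥0))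
    (hElaw : μ.map E = volume.withDensity (exponentialPDF 1)) :
    ∀ Rt : ℝ, 0 < Rt →
      (μ {ω | Real.logb 2 (1 + (γhat * E ω + γtil * (H ω) ^ 2)) ≤ Rt}).toReal
        = (∑' l : ℕ, mixCoeff m s l / (1 / (2 * s ^ 2)) ^ ((l : ℝ) + 1 / 2) *
              lowerIncGamma ((l : ℝ) + 1 / 2)
                ((1 / (2 * s ^ 2)) * ((2 : ℝ) ^ Rt - 1) / γtil))
          - Real.exp (-((2 : ℝ) ^ Rt - 1) / γhat) *
            ∑' l : ℕ, mixCoeff m s l /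
                (1 / (2 * s ^ 2) - γtil / γhat) ^ ((l : ℝ) + 1 / 2) *
                lowerIncGamma ((l : ℝ) + 1 / 2)
                  ((1 / (2 * s ^ 2) - γtil / γhat) * ((2 : ℝ) ^ Rt - 1) / γtil) := by
  intro Rt hRt
  have hs0 : s ≠ 0 := hs.ne'
  set γt : ℝ := (2:ℝ)^Rt - 1 with hγt
  have hγtpos : 0 < γt := by
    have h1 : (1:ℝ) = (2:ℝ)^(0:ℝ) := by simp
    have h2 : (2:ℝ)^(0:ℝ) < (2:ℝ)^Rt :=
      Real.rpow_lt_rpow_left_iff (by norm_num : (1:ℝ) < 2) |>.mpr hRt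
    simp only [hγt]
    linarith
  set T : ℝ := γt / γtil with hT
  have hTpos : 0 < T := div_pos hγtpos hγtil
  set a : ℝ := Real.sqrt T with ha
  -- Step A : a.e. rewrite of the event
  have hEneg : μ {ω | E ω < 0} = 0 := by
    have hset : {ω | E ω < 0} = E ⁻¹' (Set.Iio 0) := rfl
    rw [hset, ← Measure.map_apply hE measurableSet_Iio, hElaw,
      withDensity_apply _ measurableSet_Iio]
    rw [setLIntegral_congr_fun measurableSet_Iio
      (fun x (hx : x ∈ Set.Iio 0) => exponentialPDF_of_neg hx)]
    simp
  have hEae : ∀ᵐ ω ∂μ, 0 ≤ E ω := by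
    rw [ae_iff]
    convert hEneg using 2
    ext ω
    simp [not_le]
  have hsetae : μ {ω | Real.logb 2 (1 + (γhat * E ω + γtil * (H ω)^2)) ≤ Rt}
      = μ {ω | γhat * E ω + γtil * (H ω)^2 ≤ γt} := by
    apply measure_congr
    rw [Filter.eventuallyEq_set]
    filter_upwards [hEae] with ω hω
    have hX : 0 ≤ γhat * E ω + γtil * (H ω)^2 := by positivity
    have h1 : (0:ℝ) < 1 + (γhat * E ω + γtil * (H ω)^2) := by linarith
    rw [Real.logb_le_iff_le_rpow (by norm_num) h1]
    constructor <;> intro hh <;> [skip; skip] <;> simp only [hγt] at * <;> linarith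
  rw [hsetae]
  -- Step B : joint law
  have hjoint : μ.map (fun ω => (E ω, H ω)) = (μ.map E).prod (μ.map H) :=
    (ProbabilityTheory.indepFun_iff_map_prod_eq_prod_map_map
      hE.aemeasurable hH.aemeasurable).mp hindep
  have hmeasset : MeasurableSet {p : ℝ × ℝ | γhat * p.1 + γtil * p.2^2 ≤ γt} := by
    apply measurableSet_le _ measurable_const
    fun_prop
  have hprodE : IsProbabilityMeasure (μ.map E) := Measure.isProbabilityMeasure_map hE.aemeasurable
  have hprodH : IsProbabilityMeasure (μ.map H) := Measure.isProbabilityMeasure_map hH.aemeasurable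
  have hstep1 : μ {ω | γhat * E ω + γtil * (H ω)^2 ≤ γt}
      = ((μ.map E).prod (μ.map H)) {p : ℝ × ℝ | γhat * p.1 + γtil * p.2^2 ≤ γt} := by
    rw [← hjoint, Measure.map_apply (hE.prodMk hH) hmeasset]
    rfl
  rw [hstep1, Measure.prod_apply_symm hmeasset]
  -- inner exponential CDF
  set F : ℝ → ℝ := fun y => if 0 ≤ (γt - γtil*y^2)/γhat
      then 1 - Real.exp (-(1*((γt - γtil*y^2)/γhat))) else 0 with hF
  have hinner : ∀ y : ℝ, (μ.map E) ((fun x => (x, y)) ⁻¹' {p : ℝ × ℝ | γhat * p.1 + γtil * p.2^2 ≤ γt})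
      = ENNReal.ofReal (F y) := by
    intro y
    have hpre : ((fun x => (x, y)) ⁻¹' {p : ℝ × ℝ | γhat * p.1 + γtil * p.2^2 ≤ γt})
        = Set.Iic ((γt - γtil*y^2)/γhat) := by
      ext x
      simp only [Set.mem_preimage, Set.mem_setOf_eq, Set.mem_Iic]
      rw [le_div_iff₀ hγhat]
      constructor <;> intro <;> nlinarith
    rw [hpre, hElaw, withDensity_apply _ measurableSet_Iic,
      lintegral_exponentialPDF_eq_antiDeriv one_pos]
  simp_rw [hinner]
  -- gaussian density
  have hv : (⟨s^2, sq_nonneg s⟩ : ℝ≥0) ≠ 0 := by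
    intro hcontra
    have h2 := congrArg NNReal.toReal hcontra
    change s ^ 2 = (0:ℝ) at h2
    exact hs0 (by nlinarith)
  have hFmeas : Measurable F := by
    apply Measurable.ite (measurableSet_le measurable_const (by fun_prop))
    · fun_prop
    · exact measurable_const
  have hFnn : ∀ y, 0 ≤ F y := by
    intro y
    simp only [hF]
    split_ifs with hy
    · have : Real.exp (-(1*((γt - γtil*y^2)/γhat))) ≤ 1 := by
        rw [Real.exp_le_one_iff]
        simp only [one_mul, Left.neg_nonpos_iff]
        exact hy
      linarith
    · exact le_refl 0
  rw [hHlaw, gaussianReal_of_var_ne_zero m hv,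
    lintegral_withDensity_eq_lintegral_mul _ (measurable_gaussianPDF m (⟨s^2, sq_nonneg s⟩ : ℝ≥0))
      hFmeas.ennreal_ofReal]
  have hptwise : ∀ y : ℝ, ((gaussianPDF m (⟨s^2, sq_nonneg s⟩ : ℝ≥0)) * fun y => ENNReal.ofReal (F y)) y
      = ENNReal.ofReal (gaussianPDFReal m (⟨s^2, sq_nonneg s⟩ : ℝ≥0) y * F y) := by
    intro y
    simp only [Pi.mul_apply, gaussianPDF]
    exact (ENNReal.ofReal_mul (gaussianPDFReal_nonneg m _ y)).symm
  simp_rw [hptwise]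
  have hpdfcont : Continuous (gaussianPDFReal m (⟨s^2, sq_nonneg s⟩ : ℝ≥0)) := by
    show Continuous (fun x => (√(2 * π * s^2))⁻¹ * rexp (-(x - m) ^ 2 / (2 * s^2)))
    fun_prop
  have hGmeas : AEStronglyMeasurable
      (fun y => gaussianPDFReal m (⟨s^2, sq_nonneg s⟩ : ℝ≥0) y * F y) volume :=
    (hpdfcont.measurable.mul hFmeas).aestronglyMeasurable
  have hGnn : 0 ≤ᵐ[volume] fun y => gaussianPDFReal m (⟨s^2, sq_nonneg s⟩ : ℝ≥0) y * F y :=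
    Filter.Eventually.of_forall fun y => mul_nonneg (gaussianPDFReal_nonneg m _ y) (hFnn y)
  rw [← MeasureTheory.integral_eq_lintegral_of_nonneg_ae hGnn hGmeas]
  -- rewrite as indicator
  set c : ℝ := γtil/γhat with hc
  have hGind : (fun y => gaussianPDFReal m (⟨s^2, sq_nonneg s⟩ : ℝ≥0) y * F y)
      = Set.indicator (Set.Icc (-a) a) (fun y =>
          gaussianPDFReal m (⟨s^2, sq_nonneg s⟩ : ℝ≥0) y * Real.exp (0*y^2)
          - Real.exp (-γt/γhat) *
            (gaussianPDFReal m (⟨s^2, sq_nonneg s⟩ : ℝ≥0) y * Real.exp (c*y^2))) := by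
    funext y
    have hiff : (0 ≤ (γt - γtil*y^2)/γhat) ↔ y ∈ Set.Icc (-a) a := by
      rw [le_div_iff₀ hγhat, zero_mul, Set.mem_Icc, ← abs_le, ha,
        Real.le_sqrt (abs_nonneg y) hTpos.le, sq_abs, hT, le_div_iff₀ hγtil]
      constructor <;> intro hy <;> nlinarith
    by_cases hy : y ∈ Set.Icc (-a) a
    · rw [Set.indicator_of_mem hy]
      simp only [hF]
      rw [if_pos (hiff.mpr hy)]
      have hexp : Real.exp (-(1*((γt - γtil*y^2)/γhat)))
          = Real.exp (-γt/γhat) * Real.exp (c*y^2) := by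
        rw [← Real.exp_add]
        congr 1
        rw [hc]
        field_simp
        ring
      rw [hexp, zero_mul, Real.exp_zero]
      ring
    · rw [Set.indicator_of_notMem hy]
      simp only [hF]
      rw [if_neg (fun hcon => hy (hiff.mp hcon)), mul_zero]
  rw [hGind, MeasureTheory.integral_indicator measurableSet_Icc]
  have hint1 : IntegrableOn (fun y =>
      gaussianPDFReal m (⟨s^2, sq_nonneg s⟩ : ℝ≥0) y * Real.exp (0*y^2)) (Set.Icc (-a) a) volume :=
    (hpdfcont.mul (by fun_prop)).integrableOn_Icc
  have hint2 : IntegrableOn (fun y => Real.exp (-γt/γhat) *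
      (gaussianPDFReal m (⟨s^2, sq_nonneg s⟩ : ℝ≥0) y * Real.exp (c*y^2))) (Set.Icc (-a) a) volume :=
    (continuous_const.mul (hpdfcont.mul (by fun_prop))).integrableOn_Icc
  rw [MeasureTheory.integral_sub hint1 hint2, MeasureTheory.integral_const_mul]
  have hw1 : (0:ℝ) < 1/(2*s^2) - 0 := by
    rw [sub_zero]; positivity
  have hw2 : (0:ℝ) < 1/(2*s^2) - c := by
    rw [hc, sub_pos, div_lt_div_iff₀ hγhat (by positivity)]
    nlinarith
  have hg1 := gauss_series m s hs (c := 0) hTpos.le hw1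
  have hg2 := gauss_series m s hs (c := c) hTpos.le hw2
  rw [← ha] at hg1 hg2
  rw [hg1, hg2]
  have harg : ∀ w : ℝ, w * T = w * γt / γtil := by
    intro w
    rw [hT, mul_div_assoc]
  simp only [sub_zero, harg]
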